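/- Let G₁, G₂ be connected bipartite graphs with bipartitions each of size at least 3, and let H₁, H₂ be constructed by replacing each edge ab by a path a–c_e–b and adding all edges between the two parts. Then G₁ and G₂ are isomorphic if and only if H₁ and H₂ are isomorphic. -/

import Mathlib

/-- The graph `H` built from a bipartite graph `G` with bipartition `(A, B)`:
vertices are `A ∪ B` (the original vertices) together with one new vertex `c_e`
per edge `e`; all edges between `A` and `B` are present, and each `c_e` is
adjacent exactly to the two endpoints of `e`. -/
def Hgraph {V : Type*} (G : SimpleGraph V) (A B : Set V) :
    SimpleGraph (V ⊕ G.edgeSet) where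
  Adj x y :=
    match x, y with
    | Sum.inl u, Sum.inl v => u ≠ v ∧ ((u ∈ A ∧ v ∈ B) ∨ (u ∈ B ∧ v ∈ A))
    | Sum.inl u, Sum.inr e => u ∈ (e : Sym2 V)
    | Sum.inr e, Sum.inl u => u ∈ (e : Sym2 V)
    | Sum.inr _, Sum.inr _ => False
  symm := ⟨by
    rintro (u | e) (v | f) h <;> simp_all <;> tauto⟩
  loopless := ⟨by
    rintro (u | e) h <;> simp_all⟩

/-- The order relation of the poset `P_H` on `A ∪ B ∪ C`:
`a ⪯ b` for `a ∈ A`, `b ∈ B`; `a ⪯ c_e` iff `a ∈ A` is an endpoint of `e`;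
`c_e ⪯ b` iff `b ∈ B` is an endpoint of `e`; plus reflexivity. -/
def PHle {V : Type*} (G : SimpleGraph V) (A B : Set V) :
    (V ⊕ G.edgeSet) → (V ⊕ G.edgeSet) → Prop
  | Sum.inl u, Sum.inl v => u = v ∨ (u ∈ A ∧ v ∈ B)
  | Sum.inl u, Sum.inr e => u ∈ A ∧ u ∈ (e : Sym2 V)
  | Sum.inr e, Sum.inl v => v ∈ B ∧ v ∈ (e : Sym2 V)
  | Sum.inr e, Sum.inr f => e = f

/-!
An isomorphism `ρ : G₁ ≃g G₂` extends to the `H` graphs, acting on the edge vertices `c_e`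
through `ρ.mapEdgeSet`. It respects the complete bipartite part because in a connected bipartite
graph two vertices lie on the same side iff some (equivalently every) walk between them has even
length, and `ρ` maps walks to walks of the same length.

Conversely, in `H` every original vertex is adjacent to the whole opposite side, hence has at least
three neighbours, while `c_e` has only the two endpoints of `e`. So an isomorphism of the `H`
graphs maps original vertices to original vertices, and it preserves adjacency in `G`, because two
distinct original vertices are adjacent in `G` iff they have a common neighbour of the form `c_e`.
-/

open SimpleGraph Sum

namespace SimpleGraph

variable {V V' : Type*} {G : SimpleGraph V} {G' : SimpleGraph V'} {A B : Set V} {A' : Set V'}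

lemma isBipartiteWith_of_forall_edge (hdisj : Disjoint A B)
    (hedge : ∀ e : G.edgeSet, ∃ a ∈ A, ∃ b ∈ B, (e : Sym2 V) = s(a, b)) :
    G.IsBipartiteWith A B where
  disjoint := hdisj
  mem_of_adj u v h := by
    obtain ⟨a, ha, b, hb, he⟩ := hedge ⟨s(u, v), h⟩
    rcases Sym2.eq_iff.mp he with ⟨rfl, rfl⟩ | ⟨rfl, rfl⟩ <;> tauto

lemma IsBipartiteWith.mem_iff_mem_iff_even_length (h : G.IsBipartiteWith A Aᶜ) {u v : V}
    (p : G.Walk u v) : (u ∈ A ↔ v ∈ A) ↔ Even p.length := by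
  classical
  let c : G.Coloring Bool := Coloring.mk (fun w => decide (w ∈ A)) fun hadj => by
    have := h.mem_of_adj hadj
    simp only [Set.mem_compl_iff] at this
    simp only [ne_eq, decide_eq_decide]
    tauto
  have := c.even_length_iff_congr p
  simp only [c, Coloring.mk, RelHom.coeFn_mk, decide_eq_true_eq] at this
  exact this.symm

lemma Iso.apply_mem_iff_apply_mem_iff (hconn : G.Connected) (h : G.IsBipartiteWith A Aᶜ)
    (h' : G'.IsBipartiteWith A' A'ᶜ) (ρ : G ≃g G') (u v : V) :
    (ρ u ∈ A' ↔ ρ v ∈ A') ↔ (u ∈ A ↔ v ∈ A) := by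
  obtain ⟨p⟩ := hconn.preconnected u v
  rw [h.mem_iff_mem_iff_even_length p, ← Walk.length_map ρ.toHom p]
  exact h'.mem_iff_mem_iff_even_length (p.map ρ.toHom)

end SimpleGraph

lemma Function.Injective.mem_sym2_map_iff {α β : Type*} {f : α → β} (hf : Function.Injective f)
    {a : α} {z : Sym2 α} : f a ∈ z.map f ↔ a ∈ z := by
  simp [Sym2.mem_map, hf.eq_iff]

namespace Hgraph

variable {V V' : Type*} {G : SimpleGraph V} {G' : SimpleGraph V'} {A B : Set V} {A' B' : Set V'}

lemma adj_inl_inl {u v : V} :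
    (Hgraph G A B).Adj (inl u) (inl v) ↔ u ≠ v ∧ ((u ∈ A ∧ v ∈ B) ∨ (u ∈ B ∧ v ∈ A)) :=
  Iff.rfl

lemma adj_inl_inr {u : V} {e : G.edgeSet} :
    (Hgraph G A B).Adj (inl u) (inr e) ↔ u ∈ (e : Sym2 V) :=
  Iff.rfl

lemma adj_inr_inl {u : V} {e : G.edgeSet} :
    (Hgraph G A B).Adj (inr e) (inl u) ↔ u ∈ (e : Sym2 V) :=
  Iff.rfl

lemma adj_inl_inl_compl {u v : V} :
    (Hgraph G A Aᶜ).Adj (inl u) (inl v) ↔ ¬(u ∈ A ↔ v ∈ A) := by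
  simp only [adj_inl_inl, Set.mem_compl_iff]
  refine ⟨by tauto, fun h => ⟨?_, by tauto⟩⟩
  rintro rfl
  exact h Iff.rfl

lemma adj_iff_exists_isRight {u v : V} :
    G.Adj u v ↔ u ≠ v ∧
      ∃ z, z.isRight ∧ (Hgraph G A B).Adj (inl u) z ∧ (Hgraph G A B).Adj (inl v) z := by
  refine ⟨fun h => ⟨h.ne, inr ⟨s(u, v), h⟩, rfl, Sym2.mem_mk_left u v, Sym2.mem_mk_right u v⟩, ?_⟩
  rintro ⟨huv, _ | e, hz, hu, hv⟩
  · simp at hz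
  · have he : (e : Sym2 V) = s(u, v) := (Sym2.mem_and_mem_iff huv).mp ⟨hu, hv⟩
    simpa [he] using e.2

lemma encard_neighborSet_inr_le (e : G.edgeSet) :
    ((Hgraph G A B).neighborSet (inr e)).encard ≤ 2 := by
  obtain ⟨e, he⟩ := e
  induction e using Sym2.ind with
  | _ a b =>
    have hsub : (Hgraph G A B).neighborSet (inr ⟨s(a, b), he⟩) ⊆ {inl a, inl b} := by
      rintro (u | f) h
      · rw [mem_neighborSet, adj_inr_inl] at h
        simpa using h
      · exact (h : False).elim
    calc _ ≤ ({inl a, inl b} : Set (V ⊕ G.edgeSet)).encard := Set.encard_le_encard hsub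
      _ ≤ ({inl b} : Set (V ⊕ G.edgeSet)).encard + 1 := Set.encard_insert_le _ _
      _ = 2 := by rw [Set.encard_singleton]; rfl

lemma three_le_encard_neighborSet_inl (hA : 3 ≤ A.ncard) (hAc : 3 ≤ Aᶜ.ncard) (u : V) :
    3 ≤ ((Hgraph G A Aᶜ).neighborSet (inl u)).encard := by
  set S := {v | ¬(u ∈ A ↔ v ∈ A)}
  have hS : 3 ≤ S.ncard := by
    by_cases hu : u ∈ A
    · simpa [S, hu, Set.compl_def] using hAc
    · simpa [S, hu] using hA
  have hsub : inl '' S ⊆ (Hgraph G A Aᶜ).neighborSet (inl u) := by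
    rintro _ ⟨v, hv, rfl⟩
    exact (mem_neighborSet _ _ _).mpr (adj_inl_inl_compl.mpr hv)
  calc (3 : ℕ∞) ≤ S.ncard := by exact_mod_cast hS
    _ ≤ S.encard := S.ncard_le_encard
    _ = (inl '' S).encard := (inl_injective.encard_image S).symm
    _ ≤ _ := Set.encard_le_encard hsub

lemma isLeft_iff_three_le_encard_neighborSet (hA : 3 ≤ A.ncard) (hAc : 3 ≤ Aᶜ.ncard)
    (x : V ⊕ G.edgeSet) : x.isLeft ↔ 3 ≤ ((Hgraph G A Aᶜ).neighborSet x).encard := by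
  cases x with
  | inl u => simpa using three_le_encard_neighborSet_inl hA hAc u
  | inr e => simpa using (encard_neighborSet_inr_le e).trans_lt (by norm_num)

lemma isLeft_iso_apply_iff (hA : 3 ≤ A.ncard) (hAc : 3 ≤ Aᶜ.ncard)
    (hA' : 3 ≤ A'.ncard) (hAc' : 3 ≤ A'ᶜ.ncard) (φ : Hgraph G A Aᶜ ≃g Hgraph G' A' A'ᶜ)
    (x : V ⊕ G.edgeSet) : (φ x).isLeft ↔ x.isLeft := by
  rw [isLeft_iff_three_le_encard_neighborSet hA' hAc',
    isLeft_iff_three_le_encard_neighborSet hA hAc, Set.encard_congr (φ.mapNeighborSet x)]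

def isoOfIso (ρ : G ≃g G') (hρ : ∀ u v, (ρ u ∈ A' ↔ ρ v ∈ A') ↔ (u ∈ A ↔ v ∈ A)) :
    Hgraph G A Aᶜ ≃g Hgraph G' A' A'ᶜ where
  toEquiv := Equiv.sumCongr ρ.toEquiv ρ.mapEdgeSet
  map_rel_iff' := by
    rintro (u | e) (v | f)
    · exact adj_inl_inl_compl.trans ((not_congr (hρ u v)).trans adj_inl_inl_compl.symm)
    · exact ρ.injective.mem_sym2_map_iff
    · exact ρ.injective.mem_sym2_map_iff
    · exact Iff.rfl

def baseEquiv (φ : Hgraph G A B ≃g Hgraph G' A' B') (hφ : ∀ x, (φ x).isLeft ↔ x.isLeft) :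
    V ≃ V' :=
  (Equiv.sumIsLeft.symm.trans (φ.toEquiv.subtypeEquiv fun x => (hφ x).symm)).trans Equiv.sumIsLeft

lemma inl_baseEquiv_apply (φ : Hgraph G A B ≃g Hgraph G' A' B')
    (hφ : ∀ x, (φ x).isLeft ↔ x.isLeft) (u : V) : inl (baseEquiv φ hφ u) = φ (inl u) :=
  inl_getLeft _ _

def baseIso (φ : Hgraph G A B ≃g Hgraph G' A' B') (hφ : ∀ x, (φ x).isLeft ↔ x.isLeft) :
    G ≃g G' where
  toEquiv := baseEquiv φ hφ
  map_rel_iff' {u v} := by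
    have hright (z : V ⊕ G.edgeSet) : (φ z).isRight ↔ z.isRight := by
      rw [← not_isLeft, ← not_isLeft, hφ]
    rw [adj_iff_exists_isRight (A := A') (B := B'), adj_iff_exists_isRight (A := A) (B := B),
      (baseEquiv φ hφ).injective.ne_iff, φ.surjective.exists]
    simp only [inl_baseEquiv_apply, φ.map_adj_iff, hright]

end Hgraph

theorem iso_iff_Hgraph_iso_general
    {V₁ V₂ : Type*}
    (G₁ : SimpleGraph V₁) (G₂ : SimpleGraph V₂)
    (A₁ B₁ : Set V₁) (A₂ B₂ : Set V₂)
    (hconn₁ : G₁.Connected)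
    (hdisj₁ : Disjoint A₁ B₁) (hcover₁ : A₁ ∪ B₁ = Set.univ)
    (hedge₁ : ∀ e : G₁.edgeSet, ∃ a ∈ A₁, ∃ b ∈ B₁, (e : Sym2 V₁) = s(a, b))
    (hdisj₂ : Disjoint A₂ B₂) (hcover₂ : A₂ ∪ B₂ = Set.univ)
    (hedge₂ : ∀ e : G₂.edgeSet, ∃ a ∈ A₂, ∃ b ∈ B₂, (e : Sym2 V₂) = s(a, b))
    (hA₁ : 3 ≤ A₁.ncard) (hB₁ : 3 ≤ B₁.ncard)
    (hA₂ : 3 ≤ A₂.ncard) (hB₂ : 3 ≤ B₂.ncard) :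
    Nonempty (G₁ ≃g G₂) ↔ Nonempty (Hgraph G₁ A₁ B₁ ≃g Hgraph G₂ A₂ B₂) := by
  have hbip₁ := isBipartiteWith_of_forall_edge hdisj₁ hedge₁
  have hbip₂ := isBipartiteWith_of_forall_edge hdisj₂ hedge₂
  obtain rfl : B₁ = A₁ᶜ := (IsCompl.compl_eq ⟨hdisj₁, codisjoint_iff.mpr hcover₁⟩).symm
  obtain rfl : B₂ = A₂ᶜ := (IsCompl.compl_eq ⟨hdisj₂, codisjoint_iff.mpr hcover₂⟩).symm
  constructor
  · rintro ⟨ρ⟩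
    exact ⟨Hgraph.isoOfIso ρ (Iso.apply_mem_iff_apply_mem_iff hconn₁ hbip₁ hbip₂ ρ)⟩
  · rintro ⟨φ⟩
    exact ⟨Hgraph.baseIso φ (Hgraph.isLeft_iso_apply_iff hA₁ hB₁ hA₂ hB₂ φ)⟩

/-- Two connected bipartite graphs (with parts of size at least 3) are
isomorphic iff the corresponding graphs `H₁` and `H₂` are isomorphic. -/
theorem iso_iff_Hgraph_iso
    {V₁ V₂ : Type*} [Finite V₁] [Finite V₂]
    (G₁ : SimpleGraph V₁) (G₂ : SimpleGraph V₂)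
    (A₁ B₁ : Set V₁) (A₂ B₂ : Set V₂)
    (hconn₁ : G₁.Connected) (hconn₂ : G₂.Connected)
    (hdisj₁ : Disjoint A₁ B₁) (hcover₁ : A₁ ∪ B₁ = Set.univ)
    (hedge₁ : ∀ e : G₁.edgeSet, ∃ a ∈ A₁, ∃ b ∈ B₁, (e : Sym2 V₁) = s(a, b))
    (hdisj₂ : Disjoint A₂ B₂) (hcover₂ : A₂ ∪ B₂ = Set.univ)
    (hedge₂ : ∀ e : G₂.edgeSet, ∃ a ∈ A₂, ∃ b ∈ B₂, (e : Sym2 V₂) = s(a, b))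
    (hA₁ : 3 ≤ A₁.ncard) (hB₁ : 3 ≤ B₁.ncard)
    (hA₂ : 3 ≤ A₂.ncard) (hB₂ : 3 ≤ B₂.ncard) :
    Nonempty (G₁ ≃g G₂) ↔ Nonempty (Hgraph G₁ A₁ B₁ ≃g Hgraph G₂ A₂ B₂) :=
  iso_iff_Hgraph_iso_general G₁ G₂ A₁ B₁ A₂ B₂ hconn₁ hdisj₁ hcover₁ hedge₁ hdisj₂ hcover₂ hedge₂
    hA₁ hB₁ hA₂ hB₂
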